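/- Let Δ be a nonempty open subset of the open unit disk 𝔻 and let f : Δ → ℂ be a function such that the kernel K(λ, μ) = (1 − f(λ)·conj(f(μ)))/(1 − λ·conj(μ)) is positive on Δ. Then there exists a unique Schur function 𝒮 : 𝔻 → ℂ (analytic on 𝔻 with |𝒮(z)| ≤ 1 for all z ∈ 𝔻) such that 𝒮(λ) = f(λ) for all λ ∈ Δ. -/

import Mathlib

open Complex Metric

/-- The open unit disk in `ℂ`. -/
def unitDisk : Set ℂ := Metric.ball (0 : ℂ) 1

/-- A kernel `K` is positive on a set `A ⊆ ℂ` if for every finite choice of points in `A`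
and complex coefficients, the associated quadratic form is a nonnegative real number. -/
def IsPosKernel (A : Set ℂ) (K : ℂ → ℂ → ℂ) : Prop :=
  ∀ (n : ℕ) (z : Fin n → ℂ), (∀ i, z i ∈ A) → ∀ c : Fin n → ℂ,
    0 ≤ (∑ i, ∑ j, c i * (starRingEnd ℂ) (c j) * K (z i) (z j)).re ∧
    (∑ i, ∑ j, c i * (starRingEnd ℂ) (c j) * K (z i) (z j)).im = 0

/-- A Schur function: analytic on the open unit disk and bounded by one there. -/
def IsSchur (S : ℂ → ℂ) : Prop :=
  DifferentiableOn ℂ S unitDisk ∧ ∀ z ∈ unitDisk, ‖S z‖ ≤ 1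

/-!
Model the Hardy space on `ℓ²(ℕ)`, with the Szegő kernel `k_z = (conj z ^ n)ₙ`, so that
`⟪k_z, k_w⟫ = (1 - z conj w)⁻¹` and `⟪k_z, y⟫ = ∑ yₙ zⁿ`. Positivity of the kernel says exactly that
`k_λ ↦ conj (f λ) • k_λ` is contractive on the span of `{k_λ : λ ∈ Δ}`; that span is dense, since a
power series vanishing on the open set `Δ` vanishes identically. Let `T` be the extended contraction
and `S := T* 1`. On `Δ`, `T*` acts on power series as multiplication by `f = S`, hence by `S` on the
whole disk (identity theorem), i.e. `T k_z = conj (S z) • k_z` for every `z`, and `‖T‖ ≤ 1` gives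
`|S z| ≤ 1`. Uniqueness is the identity theorem again.
-/

open ComplexConjugate FormalMultilinearSeries
open scoped ComplexInnerProductSpace Topology

lemma FormalMultilinearSeries.one_le_radius_ofScalars {c : ℕ → ℂ} {C : ℝ}
    (hc : ∀ n, ‖c n‖ ≤ C) : 1 ≤ (ofScalars ℂ c).radius := by
  refine ENNReal.le_of_forall_nnreal_lt fun r hr =>
    (ofScalars ℂ c).le_radius_of_bound C fun n => ?_
  have hr1 : (r : ℝ) < 1 := by exact_mod_cast hr
  calc ‖ofScalars ℂ c n‖ * (r : ℝ) ^ n ≤ ‖c n‖ * 1 := by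
        rw [ofScalars_norm]
        gcongr
        exact pow_le_one₀ r.2 hr1.le
    _ ≤ C := by simpa using hc n

theorem AnalyticOnNhd.eqOn_of_preconnected_of_eqOn_isOpen {𝕜 E F : Type*}
    [NontriviallyNormedField 𝕜] [NormedAddCommGroup E] [NormedSpace 𝕜 E]
    [NormedAddCommGroup F] [NormedSpace 𝕜 F] {f g : E → F} {U V : Set E}
    (hf : AnalyticOnNhd 𝕜 f U) (hg : AnalyticOnNhd 𝕜 g U) (hU : IsPreconnected U)
    (hV : IsOpen V) (hVne : V.Nonempty) (hVU : V ⊆ U) (hfg : Set.EqOn f g V) :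
    Set.EqOn f g U := by
  obtain ⟨z₀, hz₀⟩ := hVne
  exact hf.eqOn_of_preconnected_of_eventuallyEq hg hU (hVU hz₀)
    (Filter.eventually_of_mem (hV.mem_nhds hz₀) hfg)

lemma IsPosKernel.re_sum_nonneg {A : Set ℂ} {K : ℂ → ℂ → ℂ} (hK : IsPosKernel A K) {ι : Type*}
    (s : Finset ι) {z : ι → ℂ} (hz : ∀ i ∈ s, z i ∈ A) (c : ι → ℂ) :
    0 ≤ (∑ i ∈ s, ∑ j ∈ s, c i * conj (c j) * K (z i) (z j)).re := by
  set e := s.equivFin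
  have hsum (g : ι → ℂ) : ∑ i ∈ s, g i = ∑ i, g (e.symm i) := by
    rw [← Finset.sum_coe_sort s g]
    exact (e.symm.sum_comp _).symm
  simp only [hsum]
  exact (hK s.card (fun i => z (e.symm i)) (fun i => hz _ (e.symm i).2) _).1

namespace Hardy

abbrev H2 : Type := lp (fun _ : ℕ => ℂ) 2

lemma memℓp_pow {z : ℂ} (hz : ‖z‖ < 1) : Memℓp (fun n : ℕ => z ^ n) 2 := by
  refine memℓp_gen ((summable_geometric_of_lt_one (by positivity)
    (pow_lt_one₀ (norm_nonneg z) hz two_ne_zero)).congr fun n => ?_)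
  norm_num [norm_pow, ← pow_mul, mul_comm]

noncomputable def szegoKernel (z : ℂ) : H2 :=
  if hz : ‖z‖ < 1 then ⟨fun n => conj z ^ n, memℓp_pow (by rwa [RCLike.norm_conj])⟩ else 0

lemma szegoKernel_apply {z : ℂ} (hz : ‖z‖ < 1) (n : ℕ) : szegoKernel z n = conj z ^ n := by
  simp only [szegoKernel, dif_pos hz]

lemma szegoKernel_ne_zero {z : ℂ} (hz : ‖z‖ < 1) : szegoKernel z ≠ 0 := fun h => by
  have h0 := congrArg (fun v : H2 => v 0) h
  simp only [szegoKernel_apply hz, pow_zero, lp.coeFn_zero, Pi.zero_apply] at h0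
  exact one_ne_zero h0

lemma norm_mul_conj_lt_one {z w : ℂ} (hz : ‖z‖ < 1) (hw : ‖w‖ < 1) : ‖z * conj w‖ < 1 := by
  rw [norm_mul, RCLike.norm_conj]
  exact mul_lt_one_of_nonneg_of_lt_one_left (norm_nonneg z) hz hw.le

lemma inner_szegoKernel {z w : ℂ} (hz : ‖z‖ < 1) (hw : ‖w‖ < 1) :
    ⟪szegoKernel z, szegoKernel w⟫ = (1 - z * conj w)⁻¹ := by
  rw [lp.inner_eq_tsum, ← tsum_geometric_of_norm_lt_one (norm_mul_conj_lt_one hz hw)]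
  refine tsum_congr fun n => ?_
  rw [RCLike.inner_apply, szegoKernel_apply hz, szegoKernel_apply hw, map_pow,
    Complex.conj_conj, mul_pow, mul_comm]

noncomputable def hardyFun (y : H2) : ℂ → ℂ := ofScalarsSum (y ·)

lemma inner_szegoKernel_left (y : H2) {z : ℂ} (hz : ‖z‖ < 1) :
    ⟪szegoKernel z, y⟫ = hardyFun y z := by
  rw [lp.inner_eq_tsum, hardyFun, ofScalars_sum_eq]
  refine tsum_congr fun n => ?_
  rw [RCLike.inner_apply, szegoKernel_apply hz, map_pow, Complex.conj_conj, smul_eq_mul, mul_comm]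

lemma hasFPowerSeriesOnBall_hardyFun (y : H2) :
    HasFPowerSeriesOnBall (hardyFun y) (ofScalars ℂ (y ·)) 0 1 :=
  have h := one_le_radius_ofScalars fun n => lp.norm_apply_le_norm two_ne_zero y n
  ((ofScalars ℂ (y ·)).hasFPowerSeriesOnBall (zero_lt_one.trans_le h)).mono zero_lt_one h

lemma analyticOnNhd_hardyFun (y : H2) : AnalyticOnNhd ℂ (hardyFun y) unitDisk := fun z hz =>
  (hasFPowerSeriesOnBall_hardyFun y).analyticAt_of_mem (by
    rwa [← ENNReal.coe_one, Metric.eball_coe, NNReal.coe_one])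

lemma eq_zero_of_hardyFun_eventuallyEq_zero {y : H2} (h : hardyFun y =ᶠ[𝓝 0] 0) : y = 0 := by
  have h0 := (hasFPowerSeriesOnBall_hardyFun y).hasFPowerSeriesAt.eq_zero_of_eventually h
  rw [ofScalars_series_eq_zero] at h0
  exact lp.ext h0

lemma hardyFun_single_zero_one {z : ℂ} (hz : ‖z‖ < 1) : hardyFun (lp.single 2 0 1) z = 1 := by
  rw [← inner_szegoKernel_left _ hz, lp.inner_single_right, szegoKernel_apply hz, pow_zero]
  simp

lemma eq_zero_of_inner_szegoKernel_eq_zero {Δ : Set ℂ} (hΔopen : IsOpen Δ) (hΔne : Δ.Nonempty)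
    (hΔsub : Δ ⊆ unitDisk) {y : H2} (hy : ∀ lam ∈ Δ, ⟪szegoKernel lam, y⟫ = 0) : y = 0 := by
  have hΔ : Set.EqOn (hardyFun y) 0 Δ := fun lam hlam => by
    rw [← inner_szegoKernel_left y (mem_ball_zero_iff.1 (hΔsub hlam)), hy lam hlam, Pi.zero_apply]
  have hdisk := (analyticOnNhd_hardyFun y).eqOn_of_preconnected_of_eqOn_isOpen
    analyticOnNhd_const (convex_ball 0 1).isPreconnected hΔopen hΔne hΔsub hΔ
  exact eq_zero_of_hardyFun_eventuallyEq_zero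
    (Filter.eventually_of_mem (isOpen_ball.mem_nhds (mem_ball_self one_pos)) hdisk)

lemma denseRange_linearCombination_szegoKernel {Δ : Set ℂ} (hΔopen : IsOpen Δ)
    (hΔne : Δ.Nonempty) (hΔsub : Δ ⊆ unitDisk) :
    DenseRange (Finsupp.linearCombination ℂ fun lam : Δ => szegoKernel lam) := by
  rw [DenseRange, ← LinearMap.coe_range, Submodule.dense_iff_topologicalClosure_eq_top,
    Submodule.topologicalClosure_eq_top_iff, Submodule.eq_bot_iff]
  refine fun y hy => eq_zero_of_inner_szegoKernel_eq_zero hΔopen hΔne hΔsub fun lam hlam => ?_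
  refine (Submodule.mem_orthogonal _ y).1 hy _ ⟨Finsupp.single ⟨lam, hlam⟩ 1, ?_⟩
  simp

lemma inner_sum_smul_szegoKernel {ι : Type*} (s : Finset ι) {z : ι → ℂ}
    (hz : ∀ i ∈ s, ‖z i‖ < 1) (a b : ι → ℂ) :
    ⟪∑ i ∈ s, a i • szegoKernel (z i), ∑ j ∈ s, b j • szegoKernel (z j)⟫ =
      ∑ i ∈ s, ∑ j ∈ s, conj (a i) * b j * (1 - z i * conj (z j))⁻¹ := by
  rw [sum_inner]
  refine Finset.sum_congr rfl fun i hi => ?_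
  rw [inner_sum]
  refine Finset.sum_congr rfl fun j hj => ?_
  rw [inner_smul_left, inner_smul_right, inner_szegoKernel (hz i hi) (hz j hj), mul_assoc]

noncomputable def schurKernel (f : ℂ → ℂ) (lam mu : ℂ) : ℂ :=
  (1 - f lam * conj (f mu)) / (1 - lam * conj mu)

lemma norm_sum_conj_mul_smul_szegoKernel_le {Δ : Set ℂ} {f : ℂ → ℂ} (hΔsub : Δ ⊆ unitDisk)
    (hpos : IsPosKernel Δ (schurKernel f)) {ι : Type*} (s : Finset ι) {z : ι → ℂ}
    (hz : ∀ i ∈ s, z i ∈ Δ) (c : ι → ℂ) :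
    ‖∑ i ∈ s, (conj (f (z i)) * c i) • szegoKernel (z i)‖ ≤
      ‖∑ i ∈ s, c i • szegoKernel (z i)‖ := by
  have hzn : ∀ i ∈ s, ‖z i‖ < 1 := fun i hi => mem_ball_zero_iff.1 (hΔsub (hz i hi))
  have hden : ∀ i ∈ s, ∀ j ∈ s, 1 - z i * conj (z j) ≠ 0 := fun i hi j hj h => by
    simpa [← sub_eq_zero.1 h] using norm_mul_conj_lt_one (hzn i hi) (hzn j hj)
  have key : ‖∑ i ∈ s, c i • szegoKernel (z i)‖ ^ 2 -
      ‖∑ i ∈ s, (conj (f (z i)) * c i) • szegoKernel (z i)‖ ^ 2 =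
      (∑ i ∈ s, ∑ j ∈ s, conj (c i) * conj (conj (c j)) * schurKernel f (z i) (z j)).re := by
    rw [@norm_sq_eq_re_inner ℂ, @norm_sq_eq_re_inner ℂ, inner_sum_smul_szegoKernel s hzn,
      inner_sum_smul_szegoKernel s hzn, ← map_sub, RCLike.re_to_complex, ← Finset.sum_sub_distrib]
    congr 1
    refine Finset.sum_congr rfl fun i hi => ?_
    rw [← Finset.sum_sub_distrib]
    refine Finset.sum_congr rfl fun j hj => ?_
    have := hden i hi j hj
    simp only [schurKernel, map_mul, Complex.conj_conj]
    field_simp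
  exact (sq_le_sq₀ (norm_nonneg _) (norm_nonneg _)).1
    (by linarith [hpos.re_sum_nonneg s hz (fun i => conj (c i))])

theorem exists_contraction_szegoKernel {Δ : Set ℂ} {f : ℂ → ℂ} (hΔopen : IsOpen Δ)
    (hΔne : Δ.Nonempty) (hΔsub : Δ ⊆ unitDisk) (hpos : IsPosKernel Δ (schurKernel f)) :
    ∃ T : H2 →L[ℂ] H2, (∀ x, ‖T x‖ ≤ ‖x‖) ∧
      ∀ lam ∈ Δ, T (szegoKernel lam) = conj (f lam) • szegoKernel lam := by
  set P := Finsupp.linearCombination ℂ fun lam : Δ => szegoKernel lam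
  set Q := Finsupp.linearCombination ℂ fun lam : Δ => conj (f lam) • szegoKernel lam
  have hQP (c : Δ →₀ ℂ) : ‖Q c‖ ≤ 1 * ‖P c‖ := by
    simpa [P, Q, Finsupp.linearCombination_apply, Finsupp.sum, smul_smul, mul_comm] using
      norm_sum_conj_mul_smul_szegoKernel_le hΔsub hpos c.support (fun i _ => i.2) c
  have hP := denseRange_linearCombination_szegoKernel hΔopen hΔne hΔsub
  refine ⟨Q.extendOfNorm P,
    fun x => by simpa using LinearMap.norm_extendOfNorm_apply_le hP 1 hQP x, fun lam hlam => ?_⟩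
  simpa [P, Q] using LinearMap.extendOfNorm_eq hP ⟨1, hQP⟩ (Finsupp.single ⟨lam, hlam⟩ 1)

-- If `T*` is multiplication by `S`, then `T* 1 = S`.
noncomputable def symbol (T : H2 →L[ℂ] H2) : ℂ → ℂ :=
  hardyFun (ContinuousLinearMap.adjoint T (lp.single 2 0 1))

section Symbol

variable {T : H2 →L[ℂ] H2} {Δ : Set ℂ} {f : ℂ → ℂ}

lemma hardyFun_adjoint_apply_of_mem (hΔsub : Δ ⊆ unitDisk)
    (hT : ∀ lam ∈ Δ, T (szegoKernel lam) = conj (f lam) • szegoKernel lam) (y : H2)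
    {lam : ℂ} (hlam : lam ∈ Δ) :
    hardyFun (ContinuousLinearMap.adjoint T y) lam = f lam * hardyFun y lam := by
  have hl : ‖lam‖ < 1 := mem_ball_zero_iff.1 (hΔsub hlam)
  rw [← inner_szegoKernel_left _ hl, ← inner_szegoKernel_left _ hl,
    ContinuousLinearMap.adjoint_inner_right, hT lam hlam, inner_smul_left, Complex.conj_conj]

lemma symbol_eq_of_mem (hΔsub : Δ ⊆ unitDisk)
    (hT : ∀ lam ∈ Δ, T (szegoKernel lam) = conj (f lam) • szegoKernel lam)
    {lam : ℂ} (hlam : lam ∈ Δ) : symbol T lam = f lam := by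
  rw [symbol, hardyFun_adjoint_apply_of_mem hΔsub hT _ hlam,
    hardyFun_single_zero_one (mem_ball_zero_iff.1 (hΔsub hlam)), mul_one]

lemma hardyFun_adjoint_eqOn (hΔopen : IsOpen Δ) (hΔne : Δ.Nonempty) (hΔsub : Δ ⊆ unitDisk)
    (hT : ∀ lam ∈ Δ, T (szegoKernel lam) = conj (f lam) • szegoKernel lam) (y : H2) :
    Set.EqOn (hardyFun (ContinuousLinearMap.adjoint T y)) (symbol T * hardyFun y) unitDisk :=
  (analyticOnNhd_hardyFun _).eqOn_of_preconnected_of_eqOn_isOpen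
    ((analyticOnNhd_hardyFun _).mul (analyticOnNhd_hardyFun y)) (convex_ball 0 1).isPreconnected
    hΔopen hΔne hΔsub fun lam hlam => by
      rw [Pi.mul_apply, symbol_eq_of_mem hΔsub hT hlam,
        hardyFun_adjoint_apply_of_mem hΔsub hT y hlam]

lemma apply_szegoKernel (hΔopen : IsOpen Δ) (hΔne : Δ.Nonempty) (hΔsub : Δ ⊆ unitDisk)
    (hT : ∀ lam ∈ Δ, T (szegoKernel lam) = conj (f lam) • szegoKernel lam)
    {z : ℂ} (hz : z ∈ unitDisk) : T (szegoKernel z) = conj (symbol T z) • szegoKernel z := by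
  have hz' : ‖z‖ < 1 := mem_ball_zero_iff.1 hz
  refine ext_inner_right ℂ fun y => ?_
  rw [← ContinuousLinearMap.adjoint_inner_right, inner_szegoKernel_left _ hz',
    hardyFun_adjoint_eqOn hΔopen hΔne hΔsub hT y hz, inner_smul_left, Complex.conj_conj,
    inner_szegoKernel_left _ hz', Pi.mul_apply]

lemma norm_symbol_le (hΔopen : IsOpen Δ) (hΔne : Δ.Nonempty) (hΔsub : Δ ⊆ unitDisk)
    (hT : ∀ lam ∈ Δ, T (szegoKernel lam) = conj (f lam) • szegoKernel lam)
    (hTc : ∀ x, ‖T x‖ ≤ ‖x‖) {z : ℂ} (hz : z ∈ unitDisk) : ‖symbol T z‖ ≤ 1 := by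
  have h := hTc (szegoKernel z)
  rw [apply_szegoKernel hΔopen hΔne hΔsub hT hz, norm_smul, RCLike.norm_conj] at h
  have hk : 0 < ‖szegoKernel z‖ := norm_pos_iff.2 (szegoKernel_ne_zero (mem_ball_zero_iff.1 hz))
  exact (mul_le_iff_le_one_left hk).1 h

end Symbol

end Hardy

open Hardy

/-- If the kernel `(1 - f(λ) conj(f(μ)))/(1 - λ conj(μ))` is positive on a nonempty open
subset `Δ` of the open unit disk, then `f` extends uniquely to a Schur function on the disk. -/
theorem exists_unique_schur_extension
    (Δ : Set ℂ) (hΔopen : IsOpen Δ) (hΔne : Δ.Nonempty) (hΔsub : Δ ⊆ unitDisk)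
    (f : ℂ → ℂ)
    (hpos : IsPosKernel Δ
      (fun lam mu => (1 - f lam * (starRingEnd ℂ) (f mu)) / (1 - lam * (starRingEnd ℂ) mu))) :
    ∃ S : ℂ → ℂ, IsSchur S ∧ (∀ lam ∈ Δ, S lam = f lam) ∧
      ∀ S' : ℂ → ℂ, IsSchur S' → (∀ lam ∈ Δ, S' lam = f lam) →
        ∀ z ∈ unitDisk, S' z = S z := by
  obtain ⟨T, hTc, hT⟩ := exists_contraction_szegoKernel hΔopen hΔne hΔsub hpos
  have hS : IsSchur (symbol T) :=
    ⟨(analyticOnNhd_hardyFun _).differentiableOn,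
      fun z hz => norm_symbol_le hΔopen hΔne hΔsub hT hTc hz⟩
  refine ⟨symbol T, hS, fun lam hlam => symbol_eq_of_mem hΔsub hT hlam, fun S' hS' hS'f => ?_⟩
  exact (hS'.1.analyticOnNhd isOpen_ball).eqOn_of_preconnected_of_eqOn_isOpen
    (hS.1.analyticOnNhd isOpen_ball) (convex_ball 0 1).isPreconnected hΔopen hΔne hΔsub
    fun lam hlam => (hS'f lam hlam).trans (symbol_eq_of_mem hΔsub hT hlam).symm
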